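/- arXiv:2510.00558 — 3 statements merged into one kernel-verified Lean document; each statement's English description precedes it below -/
import Mathlib

section
/- Knight's identity: for every τ ∈ (0,1) and all real numbers u and v, ρ_τ(u − v) − ρ_τ(u) = v·(1{u ≤ 0} − τ) + ∫₀^v (1{u ≤ s} − 1{u ≤ 0}) ds. -/
open MeasureTheory

noncomputable def check (τ x : ℝ) : ℝ := (τ - if x ≤ 0 then 1 else 0) * x

lemma step_mono (u : ℝ) : Monotone (fun s : ℝ => if u ≤ s then (1:ℝ) else 0) := by
  intro a b hab
  by_cases h : u ≤ a <;> by_cases h' : u ≤ b <;> simp [h, h'] <;> linarith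

lemma step_ii (u a b : ℝ) :
    IntervalIntegrable (fun s : ℝ => if u ≤ s then (1:ℝ) else 0) volume a b :=
  (step_mono u).intervalIntegrable

lemma ae_ne' (u : ℝ) : ∀ᵐ x : ℝ, x ≠ u := by
  simp [ae_iff, Real.volume_singleton]

lemma step_int_one (u a b : ℝ) (hua : u ≤ a) (hab : a ≤ b) :
    ∫ s in a..b, (if u ≤ s then (1:ℝ) else 0) = b - a := by
  rw [intervalIntegral.integral_congr (g := fun _ => (1:ℝ))
    (by intro x hx; rw [Set.uIcc_of_le hab] at hx; simp [hua.trans hx.1])]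
  simp

lemma step_int_zero (u a b : ℝ) (hab : a ≤ b) (hbu : b ≤ u) :
    ∫ s in a..b, (if u ≤ s then (1:ℝ) else 0) = 0 := by
  rw [intervalIntegral.integral_congr_ae (g := fun _ => (0:ℝ))
    (by filter_upwards [ae_ne' u] with x hx hmem
        have hxb : x ≤ b := by rw [Set.uIoc_of_le hab] at hmem; exact hmem.2
        have : ¬ u ≤ x := fun h => hx (le_antisymm (hxb.trans hbu) h)
        simp [this])]
  simp

lemma step_int_le (u a b : ℝ) (hab : a ≤ b) :
    ∫ s in a..b, (if u ≤ s then (1:ℝ) else 0) = max b u - max a u := by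
  rcases le_total u a with h1 | h1
  · rw [step_int_one u a b h1 hab, max_eq_left (h1.trans hab), max_eq_left h1]
  · rcases le_total b u with h2 | h2
    · rw [step_int_zero u a b hab h2, max_eq_right h2, max_eq_right h1]
      ring
    · rw [← intervalIntegral.integral_add_adjacent_intervals (b := u)
        (step_ii u a u) (step_ii u u b),
        step_int_zero u a u h1 le_rfl, step_int_one u u b le_rfl h2,
        max_eq_left h2, max_eq_right h1]
      ring

lemma step_int (u v : ℝ) :
    ∫ s in (0:ℝ)..v, (if u ≤ s then (1:ℝ) else 0) = max v u - max 0 u := by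
  rcases le_total 0 v with h | h
  · exact step_int_le u 0 v h
  · rw [intervalIntegral.integral_symm, step_int_le u v 0 h]; ring

/-- Knight's identity. -/
theorem knight_identity (τ : ℝ) (hτ : τ ∈ Set.Ioo (0:ℝ) 1) (u v : ℝ) :
    check τ (u - v) - check τ u =
      v * ((if u ≤ 0 then (1:ℝ) else 0) - τ) +
        ∫ s in (0:ℝ)..v, ((if u ≤ s then (1:ℝ) else 0) - if u ≤ 0 then (1:ℝ) else 0) := by
  rw [intervalIntegral.integral_sub (step_ii u 0 v) intervalIntegrable_const,
    step_int u v, intervalIntegral.integral_const]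
  unfold check
  rw [max_def, max_def]
  split_ifs <;> simp only [smul_eq_mul] <;> ring_nf <;> first | rfl | linarith
end

section
/- Let X be a real random variable with a density g satisfying g(x) ≥ c > 0 for all x in an interval containing both a₀ and a, and suppose P(X ≤ a₀) = τ for some τ ∈ (0,1). Then E[ρ_τ(X − a) − ρ_τ(X − a₀)] ≥ (c/2)·(a − a₀)². -/
open MeasureTheory

lemma check_eq_aux (τ u : ℝ) : check τ u = τ * u - min u 0 := by
  unfold check
  split_ifs with h
  · rw [min_eq_left h]; ring
  · rw [min_eq_right (le_of_not_ge h)]; ring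

lemma Ioc_measure_lb_aux (g : ℝ → ℝ) (hg : Measurable g) {c a₀ a : ℝ}
    (hc : 0 ≤ c) (hgc : ∀ x ∈ Set.uIcc a₀ a, c ≤ g x)
    {u v : ℝ} (h1 : min a₀ a ≤ u) (h2 : u ≤ v) (h3 : v ≤ max a₀ a) :
    ENNReal.ofReal (c * (v - u)) ≤
      (volume.withDensity fun x => ENNReal.ofReal (g x)) (Set.Ioc u v) := by
  rw [withDensity_apply _ measurableSet_Ioc]
  calc ENNReal.ofReal (c * (v - u)) = ENNReal.ofReal c * volume (Set.Ioc u v) := by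
        rw [Real.volume_Ioc, ← ENNReal.ofReal_mul hc]
    _ = ∫⁻ _ in Set.Ioc u v, ENNReal.ofReal c := by rw [setLIntegral_const, mul_comm]
    _ ≤ ∫⁻ x in Set.Ioc u v, ENNReal.ofReal (g x) := by
        refine setLIntegral_mono hg.ennreal_ofReal fun x hx => ENNReal.ofReal_le_ofReal ?_
        refine hgc x ?_
        have hx1 := hx.1
        have hx2 := hx.2
        exact Set.mem_uIcc.mpr (by rcases le_total a₀ a with hle | hle <;>
          [left; right] <;> constructor <;>
          simp [min_def, max_def, hle] at h1 h3 ⊢ <;> linarith)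

/-- If `X` has a density `g` bounded below by `c > 0` on the interval between `a₀` and `a`,
and `P(X ≤ a₀) = τ`, then `E[ρ_τ(X − a) − ρ_τ(X − a₀)] ≥ (c/2)(a − a₀)²`. -/
theorem check_expectation_lower_bound (g : ℝ → ℝ) (hg : Measurable g) (c τ a₀ a : ℝ)
    (hc : 0 < c) (hτ : τ ∈ Set.Ioo (0:ℝ) 1)
    (hgc : ∀ x ∈ Set.uIcc a₀ a, c ≤ g x)
    (μ : Measure ℝ) (hμ : μ = volume.withDensity fun x => ENNReal.ofReal (g x))
    [IsProbabilityMeasure μ]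
    (hq : μ (Set.Iic a₀) = ENNReal.ofReal τ) :
    c / 2 * (a - a₀)^2 ≤ ∫ x, (check τ (x - a) - check τ (x - a₀)) ∂μ := by
  obtain ⟨hτ0, hτ1⟩ := hτ
  have hμac : μ ≪ volume := hμ ▸ withDensity_absolutelyContinuous _ _
  have hIioIic : ∀ y : ℝ, μ (Set.Iio y) = μ (Set.Iic y) := by
    intro y
    refine le_antisymm (measure_mono Set.Iio_subset_Iic_self) ?_
    calc μ (Set.Iic y) = μ (Set.Iio y ∪ {y}) := by rw [Set.Iio_union_right]
      _ ≤ μ (Set.Iio y) + μ {y} := measure_union_le _ _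
      _ = μ (Set.Iio y) := by rw [hμac (Real.volume_singleton), add_zero]
  rcases le_total a₀ a with hord | hord
  · -- case a₀ ≤ a
    set h : ℝ → ℝ := fun x => min (x - a₀) 0 - min (x - a) 0 with hh
    have hh0 : ∀ x, 0 ≤ h x := fun x =>
      sub_nonneg.mpr (min_le_min (by linarith) le_rfl)
    have hhle : ∀ x, h x ≤ a - a₀ := by
      intro x
      simp only [hh]
      rcases le_total (x - a₀) 0 with h1 | h1 <;> rcases le_total (x - a) 0 with h2 | h2 <;>
        simp only [min_eq_left h1, min_eq_right h1, min_eq_left h2, min_eq_right h2] <;> linarith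
    have hcont : Continuous h :=
      ((continuous_id.sub continuous_const).min continuous_const).sub
        ((continuous_id.sub continuous_const).min continuous_const)
    have hint : Integrable h μ := by
      refine Integrable.mono' (integrable_const (a - a₀)) hcont.aestronglyMeasurable
        (ae_of_all _ fun x => ?_)
      rw [Real.norm_eq_abs, abs_of_nonneg (hh0 x)]
      exact hhle x
    have hlc := hint.integral_eq_integral_meas_lt (ae_of_all _ hh0)
    set G : ℝ → ℝ := fun t => (μ {x | t < h x}).toReal with hG
    have hGanti : Antitone fun t => μ {x | t < h x} :=
      fun s t hst => measure_mono fun x hx => lt_of_le_of_lt hst hx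
    have hGmeas : Measurable G := hGanti.measurable.ennreal_toReal
    have hsupp : ∀ t, a - a₀ ≤ t → G t = 0 := by
      intro t ht
      have : {x | t < h x} = ∅ := by
        ext x
        simp only [Set.mem_setOf_eq, Set.mem_empty_iff_false, iff_false, not_lt]
        exact (hhle x).trans ht
      simp [hG, this]
    have hIoo : ∫ t in Set.Ioi (0:ℝ), G t = ∫ t in Set.Ioo (0:ℝ) (a - a₀), G t := by
      have heq : Set.EqOn G ((Set.Ioo (0:ℝ) (a - a₀)).indicator G) (Set.Ioi 0) := by
        intro t ht
        by_cases hmem : t ∈ Set.Ioo (0:ℝ) (a - a₀)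
        · rw [Set.indicator_of_mem hmem]
        · rw [Set.indicator_of_notMem hmem]
          simp only [Set.mem_Ioo, not_and, not_lt] at hmem
          exact hsupp t (hmem ht)
      rw [setIntegral_congr_fun measurableSet_Ioi heq,
        setIntegral_indicator measurableSet_Ioo,
        Set.inter_eq_right.mpr Set.Ioo_subset_Ioi_self]
    have key : ∀ t ∈ Set.Ioo (0:ℝ) (a - a₀), τ + c * ((a - a₀) - t) ≤ G t := by
      rintro t ⟨ht0, htL⟩
      have hsub : Set.Iio (a - t) ⊆ {x | t < h x} := by
        intro x hx
        simp only [Set.mem_Iio] at hx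
        simp only [Set.mem_setOf_eq, hh]
        rcases le_total x a₀ with hx0 | hx0
        · rw [min_eq_left (by linarith), min_eq_left (by linarith)]; linarith
        · rw [min_eq_right (by linarith), min_eq_left (by linarith)]; linarith
      have hsplit : μ (Set.Iic (a - t)) = ENNReal.ofReal τ + μ (Set.Ioc a₀ (a - t)) := by
        rw [← hq, ← measure_union (Set.Iic_disjoint_Ioc le_rfl) measurableSet_Ioc,
          Set.Iic_union_Ioc_eq_Iic (by linarith)]
      have hlb : ENNReal.ofReal (c * ((a - t) - a₀)) ≤ μ (Set.Ioc a₀ (a - t)) := by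
        rw [hμ]
        exact Ioc_measure_lb_aux g hg hc.le hgc (min_le_left _ _) (by linarith)
          (le_trans (by linarith) (le_max_right _ _))
      calc τ + c * ((a - a₀) - t)
          = (ENNReal.ofReal τ + ENNReal.ofReal (c * ((a - t) - a₀))).toReal := by
            rw [ENNReal.toReal_add ENNReal.ofReal_ne_top ENNReal.ofReal_ne_top,
              ENNReal.toReal_ofReal hτ0.le,
              ENNReal.toReal_ofReal (by nlinarith)]
            ring
        _ ≤ (μ (Set.Iic (a - t))).toReal := by
            rw [hsplit]
            exact ENNReal.toReal_mono (by rw [← hsplit]; exact measure_ne_top _ _)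
              (add_le_add le_rfl hlb)
        _ = (μ (Set.Iio (a - t))).toReal := by rw [hIioIic]
        _ ≤ G t := ENNReal.toReal_mono (measure_ne_top _ _) (measure_mono hsub)
    have hGint : IntegrableOn G (Set.Ioo 0 (a - a₀)) volume := by
      refine Measure.integrableOn_of_bounded (M := 1) measure_Ioo_lt_top.ne
        hGmeas.aestronglyMeasurable (ae_of_all _ fun t => ?_)
      rw [Real.norm_eq_abs, abs_of_nonneg ENNReal.toReal_nonneg]
      exact (ENNReal.toReal_mono ENNReal.one_ne_top prob_le_one).trans_eq ENNReal.toReal_one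
    have hcint : IntegrableOn (fun t => τ + c * ((a - a₀) - t)) (Set.Ioo 0 (a - a₀)) volume :=
      ((continuous_const.add (continuous_const.mul
        (continuous_const.sub continuous_id))).integrableOn_Icc).mono_set
        Set.Ioo_subset_Icc_self
    have hmono := setIntegral_mono_on hcint hGint measurableSet_Ioo key
    have hcalc : ∫ t in Set.Ioo (0:ℝ) (a - a₀), (τ + c * ((a - a₀) - t)) =
        τ * (a - a₀) + c / 2 * (a - a₀)^2 := by
      rw [← integral_Ioc_eq_integral_Ioo,
        ← intervalIntegral.integral_of_le (by linarith : (0:ℝ) ≤ a - a₀)]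
      have : ∀ t : ℝ, τ + c * ((a - a₀) - t) = (τ + c * (a - a₀)) + (-c) * t := fun t => by ring
      simp_rw [this]
      have i1 : IntervalIntegrable (fun _ : ℝ => τ + c * (a - a₀)) volume 0 (a - a₀) :=
        (continuous_const.intervalIntegrable _ _)
      have i2 : IntervalIntegrable (fun t : ℝ => -c * t) volume 0 (a - a₀) :=
        ((continuous_const.mul continuous_id).intervalIntegrable _ _)
      rw [intervalIntegral.integral_add i1 i2,
        intervalIntegral.integral_const, intervalIntegral.integral_const_mul,
        integral_id, smul_eq_mul]
      ring
    have hrw : ∫ x, (check τ (x - a) - check τ (x - a₀)) ∂μ = τ * (a₀ - a) + ∫ x, h x ∂μ := by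
      have hptw : ∀ x, check τ (x - a) - check τ (x - a₀) = τ * (a₀ - a) + h x := by
        intro x; rw [check_eq_aux, check_eq_aux]; simp only [hh]; ring
      simp_rw [hptw]
      rw [integral_add (integrable_const _) hint, integral_const]
      simp
    rw [hrw, hlc, show (∫ t in Set.Ioi (0:ℝ), μ.real {x | t < h x}) = ∫ t in Set.Ioi (0:ℝ), G t from rfl, hIoo]
    rw [hcalc] at hmono
    have : (∫ t in Set.Ioi (0:ℝ), G t) = ∫ t in Set.Ioo (0:ℝ) (a-a₀), G t := hIoo
    linarith [hmono]
  · -- case a ≤ a₀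
    set f : ℝ → ℝ := fun x => min (x - a) 0 - min (x - a₀) 0 with hf
    have hf0 : ∀ x, 0 ≤ f x := fun x =>
      sub_nonneg.mpr (min_le_min (by linarith) le_rfl)
    have hfle : ∀ x, f x ≤ a₀ - a := by
      intro x
      simp only [hf]
      rcases le_total (x - a₀) 0 with h1 | h1 <;> rcases le_total (x - a) 0 with h2 | h2 <;>
        simp only [min_eq_left h1, min_eq_right h1, min_eq_left h2, min_eq_right h2] <;> linarith
    have hcont : Continuous f :=
      ((continuous_id.sub continuous_const).min continuous_const).sub
        ((continuous_id.sub continuous_const).min continuous_const)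
    have hint : Integrable f μ := by
      refine Integrable.mono' (integrable_const (a₀ - a)) hcont.aestronglyMeasurable
        (ae_of_all _ fun x => ?_)
      rw [Real.norm_eq_abs, abs_of_nonneg (hf0 x)]
      exact hfle x
    have hlc := hint.integral_eq_integral_meas_lt (ae_of_all _ hf0)
    set G : ℝ → ℝ := fun t => (μ {x | t < f x}).toReal with hG
    have hGanti : Antitone fun t => μ {x | t < f x} :=
      fun s t hst => measure_mono fun x hx => lt_of_le_of_lt hst hx
    have hGmeas : Measurable G := hGanti.measurable.ennreal_toReal
    have hsupp : ∀ t, a₀ - a ≤ t → G t = 0 := by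
      intro t ht
      have : {x | t < f x} = ∅ := by
        ext x
        simp only [Set.mem_setOf_eq, Set.mem_empty_iff_false, iff_false, not_lt]
        exact (hfle x).trans ht
      simp [hG, this]
    have hIoo : ∫ t in Set.Ioi (0:ℝ), G t = ∫ t in Set.Ioo (0:ℝ) (a₀ - a), G t := by
      have heq : Set.EqOn G ((Set.Ioo (0:ℝ) (a₀ - a)).indicator G) (Set.Ioi 0) := by
        intro t ht
        by_cases hmem : t ∈ Set.Ioo (0:ℝ) (a₀ - a)
        · rw [Set.indicator_of_mem hmem]
        · rw [Set.indicator_of_notMem hmem]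
          simp only [Set.mem_Ioo, not_and, not_lt] at hmem
          exact hsupp t (hmem ht)
      rw [setIntegral_congr_fun measurableSet_Ioi heq,
        setIntegral_indicator measurableSet_Ioo,
        Set.inter_eq_right.mpr Set.Ioo_subset_Ioi_self]
    have key : ∀ t ∈ Set.Ioo (0:ℝ) (a₀ - a), G t ≤ τ - c * t := by
      rintro t ⟨ht0, htL⟩
      have hsub : {x | t < f x} ⊆ Set.Iio (a₀ - t) := by
        intro x hx
        simp only [Set.mem_setOf_eq, hf] at hx
        simp only [Set.mem_Iio]
        rcases le_total (x - a₀) 0 with h1 | h1 <;> rcases le_total (x - a) 0 with h2 | h2 <;>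
          simp only [min_eq_left h1, min_eq_right h1, min_eq_left h2, min_eq_right h2] at hx <;>
          linarith
      have hsplit : ENNReal.ofReal τ = μ (Set.Iic (a₀ - t)) + μ (Set.Ioc (a₀ - t) a₀) := by
        rw [← hq, ← measure_union (Set.Iic_disjoint_Ioc le_rfl) measurableSet_Ioc,
          Set.Iic_union_Ioc_eq_Iic (by linarith)]
      have hlb : ENNReal.ofReal (c * (a₀ - (a₀ - t))) ≤ μ (Set.Ioc (a₀ - t) a₀) := by
        rw [hμ]
        exact Ioc_measure_lb_aux g hg hc.le hgc (le_trans (min_le_right _ _) (by linarith))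
          (by linarith) (le_max_left _ _)
      have e1 : τ = (μ (Set.Iic (a₀ - t))).toReal + (μ (Set.Ioc (a₀ - t) a₀)).toReal := by
        rw [← ENNReal.toReal_add (measure_ne_top _ _) (measure_ne_top _ _), ← hsplit,
          ENNReal.toReal_ofReal hτ0.le]
      have e2 : c * t ≤ (μ (Set.Ioc (a₀ - t) a₀)).toReal := by
        have h' := ENNReal.toReal_mono (measure_ne_top _ _) hlb
        rwa [ENNReal.toReal_ofReal (by nlinarith), show a₀ - (a₀ - t) = t by ring] at h'
      have e3 : G t ≤ (μ (Set.Iic (a₀ - t))).toReal := by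
        calc G t ≤ (μ (Set.Iio (a₀ - t))).toReal :=
              ENNReal.toReal_mono (measure_ne_top _ _) (measure_mono hsub)
          _ = (μ (Set.Iic (a₀ - t))).toReal := by rw [hIioIic]
      linarith
    have hGint : IntegrableOn G (Set.Ioo 0 (a₀ - a)) volume := by
      refine Measure.integrableOn_of_bounded (M := 1) measure_Ioo_lt_top.ne
        hGmeas.aestronglyMeasurable (ae_of_all _ fun t => ?_)
      rw [Real.norm_eq_abs, abs_of_nonneg ENNReal.toReal_nonneg]
      exact (ENNReal.toReal_mono ENNReal.one_ne_top prob_le_one).trans_eq ENNReal.toReal_one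
    have hcint : IntegrableOn (fun t => τ - c * t) (Set.Ioo 0 (a₀ - a)) volume :=
      ((continuous_const.sub (continuous_const.mul continuous_id)).integrableOn_Icc).mono_set
        Set.Ioo_subset_Icc_self
    have hmono := setIntegral_mono_on hGint hcint measurableSet_Ioo key
    have hcalc : ∫ t in Set.Ioo (0:ℝ) (a₀ - a), (τ - c * t) =
        τ * (a₀ - a) - c / 2 * (a₀ - a)^2 := by
      rw [← integral_Ioc_eq_integral_Ioo,
        ← intervalIntegral.integral_of_le (by linarith : (0:ℝ) ≤ a₀ - a)]
      have i1 : IntervalIntegrable (fun _ : ℝ => τ) volume 0 (a₀ - a) :=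
        (continuous_const.intervalIntegrable _ _)
      have i2 : IntervalIntegrable (fun t : ℝ => c * t) volume 0 (a₀ - a) :=
        ((continuous_const.mul continuous_id).intervalIntegrable _ _)
      rw [intervalIntegral.integral_sub i1 i2,
        intervalIntegral.integral_const, intervalIntegral.integral_const_mul,
        integral_id, smul_eq_mul]
      ring
    have hrw : ∫ x, (check τ (x - a) - check τ (x - a₀)) ∂μ = τ * (a₀ - a) - ∫ x, f x ∂μ := by
      have hptw : ∀ x, check τ (x - a) - check τ (x - a₀) = τ * (a₀ - a) - f x := by
        intro x; rw [check_eq_aux, check_eq_aux]; simp only [hf]; ring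
      simp_rw [hptw]
      rw [integral_sub (integrable_const _) hint, integral_const]
      simp
    rw [hrw, hlc, show (∫ t in Set.Ioi (0:ℝ), μ.real {x | t < f x}) = ∫ t in Set.Ioi (0:ℝ), G t from rfl, hIoo]
    rw [hcalc] at hmono
    nlinarith [hmono]
end

section
/- Projection separation bound: let F⁰ ∈ ℝ^{T×r} satisfy F⁰'F⁰/T = I_r and let F̂ ∈ ℝ^{T×ℓ} with ℓ < r, and let M_{F̂} = I_T − F̂(F̂'F̂)^†F̂' be the orthogonal projection onto the orthogonal complement of the column space of F̂. Then ‖M_{F̂}F⁰‖_F²/T ≥ 1. -/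
open Matrix

/-- Frobenius norm of a real matrix. -/
noncomputable def frobNorm {m n : Type*} [Fintype m] [Fintype n] (A : Matrix m n ℝ) : ℝ :=
  Real.sqrt (∑ i, ∑ j, (A i j)^2)

/-- Projection separation bound: if `F⁰'F⁰/T = I_r`, `ℓ < r`, and `M` is the orthogonal
projection onto the orthogonal complement of the column space of `F̂ ∈ ℝ^{T×ℓ}`, then
`‖M F⁰‖_F²/T ≥ 1`. -/
theorem projection_separation_bound {T r ℓ : ℕ} (hℓ : ℓ < r)
    (F0 : Matrix (Fin T) (Fin r) ℝ) (hF0 : (T : ℝ)⁻¹ • (F0ᵀ * F0) = 1)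
    (Fhat : Matrix (Fin T) (Fin ℓ) ℝ) (M : Matrix (Fin T) (Fin T) ℝ)
    (hMsym : Mᵀ = M) (hMidem : M * M = M) (hMF : M * Fhat = 0)
    (hMperp : ∀ v : Fin T → ℝ, Fhatᵀ *ᵥ v = 0 → M *ᵥ v = v) :
    1 ≤ (frobNorm (M * F0))^2 / T := by
  -- T > 0
  have hr : 0 < r := lt_of_le_of_lt (Nat.zero_le _) hℓ
  have hT : 0 < T := by
    by_contra h
    push_neg at h
    interval_cases T
    have := congrFun (congrFun hF0 ⟨0, hr⟩) ⟨0, hr⟩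
    simp [Matrix.mul_apply, Matrix.one_apply] at this
  have hTR : (0:ℝ) < (T:ℝ) := by exact_mod_cast hT
  -- F0ᵀ * F0 = T • 1
  have hF0' : F0ᵀ * F0 = (T:ℝ) • (1 : Matrix (Fin r) (Fin r) ℝ) := by
    have := congrArg (fun A => (T:ℝ) • A) hF0
    simpa [smul_smul, mul_inv_cancel₀ (ne_of_gt hTR)] using this
  -- find x ≠ 0 with (Fhatᵀ * F0) *ᵥ x = 0
  have hnotinj : ¬ Function.Injective ((Fhatᵀ * F0).mulVecLin) := by
    intro hinj
    have := LinearMap.finrank_le_finrank_of_injective hinj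
    simp [Module.finrank_pi] at this
    omega
  obtain ⟨a, b, hab, hne⟩ : ∃ a b, (Fhatᵀ * F0).mulVecLin a = (Fhatᵀ * F0).mulVecLin b ∧ a ≠ b := by
    simpa [Function.Injective] using hnotinj
  set x := a - b with hx
  have hx0 : x ≠ 0 := sub_ne_zero_of_ne hne
  have hker : (Fhatᵀ * F0) *ᵥ x = 0 := by
    have : (Fhatᵀ * F0).mulVecLin x = 0 := by
      rw [hx, map_sub, hab, sub_self]
    rw [← Matrix.mulVecLin_apply]
    exact this
  -- M F0 x = F0 x
  have hv : (M * F0) *ᵥ x = F0 *ᵥ x := by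
    rw [← Matrix.mulVec_mulVec]
    apply hMperp
    rw [Matrix.mulVec_mulVec]
    exact hker
  -- ‖F0 x‖² = T ‖x‖²
  have hnorm : (F0 *ᵥ x) ⬝ᵥ (F0 *ᵥ x) = (T:ℝ) * (x ⬝ᵥ x) := by
    calc (F0 *ᵥ x) ⬝ᵥ (F0 *ᵥ x) = x ⬝ᵥ ((F0ᵀ * F0) *ᵥ x) := by
          rw [← Matrix.mulVec_mulVec, Matrix.dotProduct_mulVec, ← Matrix.mulVec_transpose,
            dotProduct_comm]
      _ = (T:ℝ) * (x ⬝ᵥ x) := by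
          rw [hF0', Matrix.smul_mulVec, Matrix.one_mulVec, dotProduct_smul,
            smul_eq_mul]
  set A := M * F0 with hA
  set S : ℝ := ∑ i, ∑ j, (A i j)^2 with hS
  have hS0 : 0 ≤ S := Finset.sum_nonneg fun i _ => Finset.sum_nonneg fun j _ => sq_nonneg _
  -- Cauchy–Schwarz: (A x)⬝(A x) ≤ S * (x⬝x)
  have hCS : (A *ᵥ x) ⬝ᵥ (A *ᵥ x) ≤ S * (x ⬝ᵥ x) := by
    have h1 : ∀ i, (A *ᵥ x) i ^ 2 ≤ (∑ j, (A i j)^2) * (x ⬝ᵥ x) := by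
      intro i
      have := Finset.sum_mul_sq_le_sq_mul_sq Finset.univ (fun j => A i j) x
      simpa [Matrix.mulVec, dotProduct, pow_two] using this
    calc (A *ᵥ x) ⬝ᵥ (A *ᵥ x) = ∑ i, (A *ᵥ x) i ^ 2 := by
          simp [dotProduct, pow_two]
      _ ≤ ∑ i, (∑ j, (A i j)^2) * (x ⬝ᵥ x) := Finset.sum_le_sum fun i _ => h1 i
      _ = S * (x ⬝ᵥ x) := by rw [← Finset.sum_mul]
  have hxx : 0 < x ⬝ᵥ x := by
    rcases Function.ne_iff.mp hx0 with ⟨i, hi⟩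
    have hi' : x i ≠ 0 := by simpa using hi
    have h1 : 0 < x i * x i := mul_self_pos.mpr hi'
    have h2 : x i * x i ≤ ∑ j, x j * x j :=
      Finset.single_le_sum (f := fun j => x j * x j) (fun j _ => mul_self_nonneg _) (Finset.mem_univ i)
    have h3 := lt_of_lt_of_le h1 h2
    simpa [dotProduct] using h3
  have hTS : (T:ℝ) ≤ S := by
    have h1 : (T:ℝ) * (x ⬝ᵥ x) ≤ S * (x ⬝ᵥ x) := by
      rw [← hnorm, ← hv]; exact hCS
    exact le_of_mul_le_mul_right h1 hxx
  have hfrob : (frobNorm A)^2 = S := by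
    rw [frobNorm, hS]
    exact Real.sq_sqrt (hS ▸ hS0)
  rw [hfrob, le_div_iff₀ hTR, one_mul]
  exact hTS
end
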